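/- Let C be a cycle of π and let t be the largest integer r with |E_r ∩ C| > b (with t = 0 if |C| ≤ b). If a best b-staircase from some element i ∈ C exists, then its size equals t; in particular, all best b-staircases of elements of C have the same size. -/

import Mathlib

attribute [local instance] Classical.propDecidable

variable {n : ℕ}

/-- The first element of `E` encountered strictly after `x` when following `π` along its cycle
(`x` itself if no element of `E` is reachable).  For `E = E_r` this is the map `π_r`. -/
noncomputable def nextIn (π : Equiv.Perm (Fin n)) (E : Finset (Fin n)) (x : Fin n) : Fin n :=
  if h : ∃ k, 0 < k ∧ (⇑π)^[k] x ∈ E then (⇑π)^[Nat.find h] x else x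

/-- `b`-fold iteration of `nextIn`; for `E = E_r` this is `π_r^b`. -/
noncomputable def stepB (π : Equiv.Perm (Fin n)) (b : ℕ) (E : Finset (Fin n)) (x : Fin n) :
    Fin n :=
  (nextIn π E)^[b] x

/-- `level π b r` is the set `E_{r+1}` (0-indexed): `level π b 0 = E_1 = [n]`, and `E_{r+1}`
consists of the elements `i` of `E_r` with `i < π_r^k(i)` for all `k ∈ {−b,…,b} \ {0}`. -/
noncomputable def level (π : Equiv.Perm (Fin n)) (b : ℕ) : ℕ → Finset (Fin n)
  | 0 => Finset.univ
  | r + 1 =>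
    (level π b r).filter fun i =>
      (∀ k ∈ Finset.Icc 1 b, i < (nextIn π (level π b r))^[k] i) ∧
      (∀ k ∈ Finset.Icc 1 b, i < (nextIn π⁻¹ (level π b r))^[k] i)

/-- The cycle of `π` containing `x`, as a finset. -/
def cycleOfF (π : Equiv.Perm (Fin n)) (x : Fin n) : Finset (Fin n) :=
  (Finset.range n).image fun k => (⇑π)^[k] x

/-- `iSeq π b i k` is the element `i_{k+1}` of the `b`-staircase from `i`:
`i_1 = i` and `i_{k+1} = π_k^b(i_k)`. -/
noncomputable def iSeq (π : Equiv.Perm (Fin n)) (b : ℕ) (i : Fin n) : ℕ → Fin n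
  | 0 => i
  | k + 1 => stepB π b (level π b k) (iSeq π b i k)

/-- `jSeq π b r m q` is the element `j_{r+1-q}` of the descending part of the `b`-staircase of
size `r` with middle `m`: `j_{r+1} = m` and `j_k = π_k^b(j_{k+1})`. -/
noncomputable def jSeq (π : Equiv.Perm (Fin n)) (b : ℕ) (r : ℕ) (m : Fin n) : ℕ → Fin n
  | 0 => m
  | q + 1 => stepB π b (level π b (r - (q + 1))) (jSeq π b r m q)

/-- The sequence `(i = i_1, …, i_{r+1} = m = j_{r+1}, j_r, …, j_1 = i')` is a `b`-staircase of
size `r` from `i`: `i_k, j_k ∈ E_k` for all `k ∈ [r+1]`. -/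
def IsStaircase (π : Equiv.Perm (Fin n)) (b r : ℕ) (i : Fin n) : Prop :=
  ∀ k ≤ r, iSeq π b i k ∈ level π b k ∧
    jSeq π b r (iSeq π b i r) k ∈ level π b (r - k)

/-- An almost `b`-staircase of size `r` from `i`: membership `i_k, j_k ∈ E_k` is required only
for `k ∈ [r]`. -/
def IsAlmost (π : Equiv.Perm (Fin n)) (b r : ℕ) (i : Fin n) : Prop :=
  (∀ k < r, iSeq π b i k ∈ level π b k) ∧
  (∀ q, 1 ≤ q → q ≤ r → jSeq π b r (iSeq π b i r) q ∈ level π b (r - q))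

/-- The `b`-staircase of size `r` from `i` is the best `b`-staircase from `i`: there is no
proper (i.e. with `|E_{r+1} ∩ C| > b`, where `C` is the cycle of `i`) almost `b`-staircase of
size `r+1` from `i`. -/
def IsBest (π : Equiv.Perm (Fin n)) (b r : ℕ) (i : Fin n) : Prop :=
  IsStaircase π b r i ∧
    ¬ (IsAlmost π b (r + 1) i ∧ b < ((level π b r) ∩ cycleOfF π i).card)

/-- Fich et al.'s (`b = 1`) notion: the staircase of size `r` from `i` is the best staircase
from `i`, where an almost staircase of size `r+1` is proper iff `i_{r+1} ≠ m'` (its middle). -/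
def IsBest1 (π : Equiv.Perm (Fin n)) (r : ℕ) (i : Fin n) : Prop :=
  IsStaircase π 1 r i ∧
    ¬ (IsAlmost π 1 (r + 1) i ∧ iSeq π 1 i r ≠ iSeq π 1 i (r + 1))

/-! Being best does not depend on the staircase itself: from the middle `i_{r+1} ∈ E_{r+1}` every
descending step stays inside the current level, so an almost staircase of size `r + 1` always
exists, and a staircase of size `r` is best exactly when `|E_{r+1} ∩ C| ≤ b`. On the other hand,
`π_r` is injective on `E_r` (the first-return map of `π⁻¹` inverts it), so if `|E_r ∩ C| ≤ b`
the orbit of `i_{r+1}` under `π_r` would return to `i_{r+1}` within `b` steps, contradicting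
`i_{r+1} < π_r^k(i_{r+1})`. Hence `|E_r ∩ C| > b ≥ |E_{r+1} ∩ C|`, which pins `r` down as `t`. -/

open Finset Function Equiv.Perm

lemma mem_cycleOfF_iff {π : Equiv.Perm (Fin n)} {x y : Fin n} :
    y ∈ cycleOfF π x ↔ π.SameCycle x y := by
  constructor
  · intro hy
    obtain ⟨k, -, rfl⟩ := mem_image.1 hy
    exact sameCycle_pow_right.2 (.refl π x)
  · intro h
    by_cases hx : x ∈ π.support
    · obtain ⟨k, hk, rfl⟩ := h.exists_pow_eq_of_mem_support hx
      exact mem_image.2 ⟨k, mem_range.2 (hk.trans_le ((card_le_univ _).trans_eq (by simp))), rfl⟩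
    · obtain ⟨k, rfl⟩ := h.exists_nat_pow_eq
      rw [pow_apply_eq_self_of_apply_eq_self (notMem_support.1 hx)]
      exact mem_image.2 ⟨0, mem_range.2 (Fin.pos x), rfl⟩

lemma cycleOfF_eq_of_mem {π : Equiv.Perm (Fin n)} {x y : Fin n} (h : y ∈ cycleOfF π x) :
    cycleOfF π y = cycleOfF π x := by
  rw [mem_cycleOfF_iff] at h
  ext z
  simp only [mem_cycleOfF_iff]
  exact ⟨h.trans, h.symm.trans⟩

lemma Finset.exists_iterate_eq_self_of_injOn {α : Type*} {f : α → α} {s : Finset α}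
    (hmaps : Set.MapsTo f s s) (hinj : Set.InjOn f s) {y : α} (hy : y ∈ s) :
    ∃ k, 0 < k ∧ k ≤ #s ∧ f^[k] y = y := by
  obtain ⟨i, hi, j, hj, hij, heq⟩ := exists_ne_map_eq_of_card_lt_of_maps_to
    (s := range (#s + 1)) (f := fun j => f^[j] y) (by simp) fun j _ => hmaps.iterate j hy
  wlog hlt : i < j generalizing i j
  · exact this j hj i hi hij.symm heq.symm (by omega)
  refine ⟨j - i, by omega, by simp only [mem_range] at hj; omega, ?_⟩
  refine hinj.iterate hmaps i (hmaps.iterate _ hy) hy ?_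
  rw [← iterate_add_apply, Nat.add_sub_cancel' hlt.le]
  exact heq.symm

section NextIn

variable {π : Equiv.Perm (Fin n)} {E : Finset (Fin n)} {x : Fin n}

lemma iterate_inv_iterate_of_le {k d : ℕ} (h : k ≤ d) :
    (⇑π⁻¹)^[k] ((⇑π)^[d] x) = (⇑π)^[d - k] x := by
  obtain ⟨j, rfl⟩ := Nat.exists_eq_add_of_le h
  simp only [iterate_eq_pow, ← Equiv.Perm.mul_apply, inv_pow, pow_add, inv_mul_cancel_left,
    Nat.add_sub_cancel_left]

lemma sameCycle_nextIn : π.SameCycle x (nextIn π E x) := by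
  unfold nextIn
  split
  · exact sameCycle_pow_right.2 (.refl π x)
  · exact .refl π x

lemma sameCycle_iterate_nextIn (m : ℕ) : π.SameCycle x ((nextIn π E)^[m] x) := by
  induction m with
  | zero => exact .refl π x
  | succ m ih => rw [iterate_succ_apply']; exact ih.trans sameCycle_nextIn

lemma nextIn_eq_iterate {d : ℕ} (hd : 0 < d) (hdE : (⇑π)^[d] x ∈ E)
    (hmin : ∀ k, 0 < k → k < d → (⇑π)^[k] x ∉ E) : nextIn π E x = (⇑π)^[d] x := by
  have h : ∃ k, 0 < k ∧ (⇑π)^[k] x ∈ E := ⟨d, hd, hdE⟩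
  rw [nextIn, dif_pos h, (Nat.find_eq_iff h).2 ⟨⟨hd, hdE⟩, fun k hk ⟨hk0, hkE⟩ => hmin k hk0 hk hkE⟩]

lemma exists_iterate_mem_of_mem (hx : x ∈ E) :
    ∃ k, 0 < k ∧ (⇑π)^[k] x ∈ E :=
  ⟨orderOf π, orderOf_pos π, by rwa [iterate_eq_pow, pow_orderOf_eq_one, one_apply]⟩

lemma nextIn_mem (hx : x ∈ E) : nextIn π E x ∈ E := by
  have h := exists_iterate_mem_of_mem (π := π) hx
  rw [nextIn, dif_pos h]
  exact (Nat.find_spec h).2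

lemma nextIn_inv_nextIn (hx : x ∈ E) : nextIn π⁻¹ E (nextIn π E x) = x := by
  have h := exists_iterate_mem_of_mem (π := π) hx
  have hfirst : nextIn π E x = (⇑π)^[Nat.find h] x := by rw [nextIn, dif_pos h]
  rw [hfirst]
  -- `π⁻¹` first returns to `E` after exactly `Nat.find h` steps, by minimality of `Nat.find h`
  rw [nextIn_eq_iterate (Nat.find_spec h).1, iterate_inv_iterate_of_le le_rfl, Nat.sub_self,
    iterate_zero_apply]
  · rwa [iterate_inv_iterate_of_le le_rfl, Nat.sub_self, iterate_zero_apply]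
  · intro k hk0 hkd hkE
    rw [iterate_inv_iterate_of_le hkd.le] at hkE
    exact Nat.find_min h (by omega : Nat.find h - k < Nat.find h) ⟨by omega, hkE⟩

lemma injOn_nextIn : Set.InjOn (nextIn π E) E :=
  Set.LeftInvOn.injOn (f₁' := nextIn π⁻¹ E) fun _ hx => nextIn_inv_nextIn hx

lemma mapsTo_nextIn_inter_cycleOfF (y : Fin n) :
    Set.MapsTo (nextIn π E) ↑(E ∩ cycleOfF π y) ↑(E ∩ cycleOfF π y) := by
  intro x hx
  simp only [coe_inter, Set.mem_inter_iff, mem_coe, mem_cycleOfF_iff] at hx ⊢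
  exact ⟨nextIn_mem hx.1, hx.2.trans sameCycle_nextIn⟩

lemma stepB_mem {b : ℕ} (hx : x ∈ E) : stepB π b E x ∈ E :=
  Set.MapsTo.iterate (fun _ hy => nextIn_mem hy : Set.MapsTo (nextIn π E) E E) b hx

end NextIn

section Level

variable {π : Equiv.Perm (Fin n)} {b : ℕ}

lemma level_succ_subset (s : ℕ) : level π b (s + 1) ⊆ level π b s := by
  intro y hy
  simp only [level, mem_filter] at hy
  exact hy.1

lemma level_antitone : Antitone (level π b) :=
  antitone_nat_of_succ_le level_succ_subset

lemma lt_card_level_inter_cycleOfF {s : ℕ} {y : Fin n} (hy : y ∈ level π b (s + 1)) :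
    b < #(level π b s ∩ cycleOfF π y) := by
  have hyS : y ∈ level π b s ∩ cycleOfF π y :=
    mem_inter.2 ⟨level_succ_subset s hy, mem_cycleOfF_iff.2 (.refl π y)⟩
  obtain ⟨k, hk0, hkS, hk⟩ := exists_iterate_eq_self_of_injOn (mapsTo_nextIn_inter_cycleOfF y)
    (injOn_nextIn.mono (by simp)) hyS
  by_contra! hS
  simp only [level, mem_filter] at hy
  have hlt := hy.2.1 k (mem_Icc.2 ⟨hk0, hkS.trans hS⟩)
  rw [hk] at hlt
  exact lt_irrefl y hlt

end Level

section Staircase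

variable {π : Equiv.Perm (Fin n)} {b r : ℕ} {i : Fin n}

lemma sameCycle_iSeq (k : ℕ) :
    π.SameCycle i (iSeq π b i k) := by
  induction k with
  | zero => exact .refl π i
  | succ k ih => exact ih.trans (sameCycle_iterate_nextIn b)

lemma jSeq_succ_mem_level {m : Fin n} (hm : m ∈ level π b (r - 1)) (q : ℕ) :
    jSeq π b r m (q + 1) ∈ level π b (r - (q + 1)) := by
  induction q with
  | zero => exact stepB_mem hm
  | succ q ih => exact stepB_mem (level_antitone (by omega) ih)

lemma IsStaircase.isAlmost_succ (h : IsStaircase π b r i) : IsAlmost π b (r + 1) i := by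
  refine ⟨fun k hk => (h k (by omega)).1, fun q hq1 _ => ?_⟩
  obtain ⟨q, rfl⟩ := Nat.exists_eq_add_of_le' hq1
  exact jSeq_succ_mem_level (stepB_mem (h r le_rfl).1) q

lemma IsStaircase.lt_card_level_inter_cycleOfF {s : ℕ} (h : IsStaircase π b (s + 1) i) :
    b < #(level π b s ∩ cycleOfF π i) := by
  have hlt := _root_.lt_card_level_inter_cycleOfF (h (s + 1) le_rfl).1
  rwa [cycleOfF_eq_of_mem (mem_cycleOfF_iff.2 (sameCycle_iSeq (s + 1)))] at hlt

lemma IsBest.card_level_inter_cycleOfF_le (h : IsBest π b r i) :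
    #(level π b r ∩ cycleOfF π i) ≤ b :=
  not_lt.1 fun hlt => h.2 ⟨h.1.isAlmost_succ, hlt⟩

end Staircase

theorem best_staircase_size_eq_general (n b : ℕ) (π : Equiv.Perm (Fin n))
    (x : Fin n) (C : Finset (Fin n)) (hC : C = cycleOfF π x)
    (t : ℕ)
    (ht1 : t ≠ 0 → b < ((level π b (t - 1)) ∩ C).card)
    (ht2 : ∀ r, t < r → ¬ b < ((level π b (r - 1)) ∩ C).card)
    (i : Fin n) (hi : i ∈ C) (r : ℕ) (hbest : IsBest π b r i) :
    r = t := by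
  have hCi : cycleOfF π i = C := hC ▸ cycleOfF_eq_of_mem (hC ▸ hi)
  have hrt : r ≤ t := by
    by_contra! htr
    obtain ⟨s, rfl⟩ : ∃ s, r = s + 1 := ⟨r - 1, by omega⟩
    exact ht2 (s + 1) htr (hCi ▸ hbest.1.lt_card_level_inter_cycleOfF)
  have htr : t ≤ r := by
    by_contra! hlt
    refine lt_irrefl b (calc
      b < #(level π b (t - 1) ∩ C) := ht1 (by omega)
      _ ≤ #(level π b r ∩ C) := card_le_card (inter_subset_inter (level_antitone (by omega)) le_rfl)
      _ ≤ b := hCi ▸ hbest.card_level_inter_cycleOfF_le)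
  omega

/-- Let `C` be a cycle of `π` and `t` the largest `r` with `|E_r ∩ C| > b`
(`t = 0` if `|C| ≤ b`; `E_r = level π b (r-1)`, 0-indexed).  If a best `b`-staircase of size
`r` from some `i ∈ C` exists, then `r = t`; in particular all best `b`-staircases of elements
of `C` have the same size. -/
theorem best_staircase_size_eq (n b : ℕ) (hb : 1 ≤ b) (π : Equiv.Perm (Fin n))
    (x : Fin n) (C : Finset (Fin n)) (hC : C = cycleOfF π x)
    (t : ℕ)
    (ht0 : C.card ≤ b → t = 0)
    (ht1 : t ≠ 0 → b < ((level π b (t - 1)) ∩ C).card)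
    (ht2 : ∀ r, t < r → ¬ b < ((level π b (r - 1)) ∩ C).card)
    (i : Fin n) (hi : i ∈ C) (r : ℕ) (hbest : IsBest π b r i) :
    r = t :=
  best_staircase_size_eq_general n b π x C hC t ht1 ht2 i hi r hbest
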